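/- arXiv:2509.23272 — 2 statements merged into one kernel-verified Lean document; each statement's English description precedes it below -/
import Mathlib

section
/- For the vector field H = (t^{η+1}/(η+1))∂_x + t^η ∂_y on functions of (t,x,y), the commutator of the transport operator ∂_t + y∂_x with the k-th power of H satisfies [∂_t + y∂_x, H^k] = k η t^{η-1} ∂_y H^{k-1} for every positive integer k. -/
open Function

/-- Partial derivative in `t` for a function of `(t, x, y)`. -/
noncomputable def pt (f : ℝ → ℝ → ℝ → ℝ) : ℝ → ℝ → ℝ → ℝ :=
  fun t x y => deriv (fun s => f s x y) t

/-- Partial derivative in `x` for a function of `(t, x, y)`. -/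
noncomputable def px3 (f : ℝ → ℝ → ℝ → ℝ) : ℝ → ℝ → ℝ → ℝ :=
  fun t x y => deriv (fun s => f t s y) x

/-- Partial derivative in `y` for a function of `(t, x, y)`. -/
noncomputable def py3 (f : ℝ → ℝ → ℝ → ℝ) : ℝ → ℝ → ℝ → ℝ :=
  fun t x y => deriv (fun s => f t x s) y

/-- The vector field `H = (t^(η+1)/(η+1)) ∂_x + t^η ∂_y`. -/
noncomputable def Hop (η : ℝ) (f : ℝ → ℝ → ℝ → ℝ) : ℝ → ℝ → ℝ → ℝ :=
  fun t x y => t ^ (η + 1) / (η + 1) * px3 f t x y + t ^ η * py3 f t x y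

/-- The transport operator `∂_t + y ∂_x`. -/
noncomputable def Transp (f : ℝ → ℝ → ℝ → ℝ) : ℝ → ℝ → ℝ → ℝ :=
  fun t x y => pt f t x y + y * px3 f t x y

open Filter Topology
open scoped ContDiff

namespace CommAux

def F3 (f : ℝ → ℝ → ℝ → ℝ) : ℝ × ℝ × ℝ → ℝ := fun p => f p.1 p.2.1 p.2.2

def Sm (f : ℝ → ℝ → ℝ → ℝ) : Prop := ∀ p : ℝ × ℝ × ℝ, 0 < p.1 → ContDiffAt ℝ ∞ (F3 f) p

variable {f : ℝ → ℝ → ℝ → ℝ} {G : ℝ × ℝ × ℝ → ℝ} {t x y : ℝ} {η : ℝ}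

lemma sect1 (h : DifferentiableAt ℝ G (t, x, y)) :
    HasDerivAt (fun s => G (s, x, y)) (fderiv ℝ G (t, x, y) (1, 0, 0)) t := by
  have hc : HasDerivAt (fun s : ℝ => ((s, x, y) : ℝ × ℝ × ℝ)) (1, 0, 0) t :=
    (hasDerivAt_id t).prodMk ((hasDerivAt_const t x).prodMk (hasDerivAt_const t y))
  exact h.hasFDerivAt.comp_hasDerivAt t hc

lemma sect2 (h : DifferentiableAt ℝ G (t, x, y)) :
    HasDerivAt (fun s => G (t, s, y)) (fderiv ℝ G (t, x, y) (0, 1, 0)) x := by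
  have hc : HasDerivAt (fun s : ℝ => ((t, s, y) : ℝ × ℝ × ℝ)) (0, 1, 0) x :=
    (hasDerivAt_const x t).prodMk ((hasDerivAt_id x).prodMk (hasDerivAt_const x y))
  exact h.hasFDerivAt.comp_hasDerivAt x hc

lemma sect3 (h : DifferentiableAt ℝ G (t, x, y)) :
    HasDerivAt (fun s => G (t, x, s)) (fderiv ℝ G (t, x, y) (0, 0, 1)) y := by
  have hc : HasDerivAt (fun s : ℝ => ((t, x, s) : ℝ × ℝ × ℝ)) (0, 0, 1) y :=
    (hasDerivAt_const y t).prodMk ((hasDerivAt_const y x).prodMk (hasDerivAt_id y))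
  exact h.hasFDerivAt.comp_hasDerivAt y hc

lemma Sm.diff (hf : Sm f) (ht : 0 < t) : DifferentiableAt ℝ (F3 f) (t, x, y) :=
  (hf (t, x, y) ht).differentiableAt (by simp)

lemma Sm.hasDerivAt_pt (hf : Sm f) (ht : 0 < t) :
    HasDerivAt (fun s => f s x y) (pt f t x y) t :=
  ((sect1 (hf.diff ht)).differentiableAt).hasDerivAt

lemma Sm.hasDerivAt_px (hf : Sm f) (ht : 0 < t) :
    HasDerivAt (fun s => f t s y) (px3 f t x y) x :=
  ((sect2 (hf.diff ht)).differentiableAt).hasDerivAt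

lemma Sm.hasDerivAt_py (hf : Sm f) (ht : 0 < t) :
    HasDerivAt (fun s => f t x s) (py3 f t x y) y :=
  ((sect3 (hf.diff ht)).differentiableAt).hasDerivAt

lemma ev_pos (ht : 0 < t) : ∀ᶠ q : ℝ × ℝ × ℝ in 𝓝 (t, x, y), 0 < q.1 :=
  (isOpen_lt continuous_const continuous_fst).eventually_mem ht

lemma fd_smooth (hf : Sm f) (ht : 0 < t) (v : ℝ × ℝ × ℝ) :
    ContDiffAt ℝ ∞ (fun q => fderiv ℝ (F3 f) q v) (t, x, y) :=
  (((hf (t, x, y) ht).fderiv_right (by simp)).clm_apply contDiffAt_const)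

/-- Eventual representation of partial derivatives by the full derivative. -/
lemma ev_pt (hf : Sm f) (ht : 0 < t) :
    F3 (pt f) =ᶠ[𝓝 (t, x, y)] fun q => fderiv ℝ (F3 f) q (1, 0, 0) := by
  filter_upwards [ev_pos (x := x) (y := y) ht] with q hq
  have := (sect1 (t := q.1) (x := q.2.1) (y := q.2.2) (hf.diff hq)).deriv
  simpa [F3, pt, px3, py3] using this

lemma ev_px (hf : Sm f) (ht : 0 < t) :
    F3 (px3 f) =ᶠ[𝓝 (t, x, y)] fun q => fderiv ℝ (F3 f) q (0, 1, 0) := by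
  filter_upwards [ev_pos (x := x) (y := y) ht] with q hq
  have := (sect2 (t := q.1) (x := q.2.1) (y := q.2.2) (hf.diff hq)).deriv
  simpa [F3, pt, px3, py3] using this

lemma ev_py (hf : Sm f) (ht : 0 < t) :
    F3 (py3 f) =ᶠ[𝓝 (t, x, y)] fun q => fderiv ℝ (F3 f) q (0, 0, 1) := by
  filter_upwards [ev_pos (x := x) (y := y) ht] with q hq
  have := (sect3 (t := q.1) (x := q.2.1) (y := q.2.2) (hf.diff hq)).deriv
  simpa [F3, pt, px3, py3] using this


lemma Sm.px (hf : Sm f) : Sm (px3 f) := fun p hp =>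
  ((fd_smooth (t := p.1) (x := p.2.1) (y := p.2.2) hf hp (0,1,0)).congr_of_eventuallyEq
    (by simpa using ev_px (t := p.1) (x := p.2.1) (y := p.2.2) hf hp))

lemma Sm.py (hf : Sm f) : Sm (py3 f) := fun p hp =>
  ((fd_smooth (t := p.1) (x := p.2.1) (y := p.2.2) hf hp (0,0,1)).congr_of_eventuallyEq
    (by simpa using ev_py (t := p.1) (x := p.2.1) (y := p.2.2) hf hp))

lemma Sm.ptm (hf : Sm f) : Sm (_root_.pt f) := fun p hp =>
  ((fd_smooth (t := p.1) (x := p.2.1) (y := p.2.2) hf hp (1,0,0)).congr_of_eventuallyEq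
    (by simpa using ev_pt (t := p.1) (x := p.2.1) (y := p.2.2) hf hp))

lemma contDiffAt_rpow (c : ℝ) {p : ℝ × ℝ × ℝ} (hp : 0 < p.1) :
    ContDiffAt ℝ ∞ (fun q : ℝ × ℝ × ℝ => q.1 ^ c) p :=
  (Real.contDiffAt_rpow_const_of_ne (ne_of_gt hp)).comp p contDiffAt_fst

lemma Sm.hop (hf : Sm f) : Sm (Hop η f) := by
  intro p hp
  have h1 : ContDiffAt ℝ ∞ (fun q : ℝ × ℝ × ℝ => q.1 ^ (η + 1) / (η + 1)) p :=
    (contDiffAt_rpow (η + 1) hp).div_const _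
  have h2 : ContDiffAt ℝ ∞ (fun q : ℝ × ℝ × ℝ => q.1 ^ η) p := contDiffAt_rpow η hp
  exact (h1.mul (hf.px p hp)).add (h2.mul (hf.py p hp))

lemma Sm.transp (hf : Sm f) : Sm (Transp f) := by
  intro p hp
  have h2 : ContDiffAt ℝ ∞ (fun q : ℝ × ℝ × ℝ => q.2.2) p :=
    (contDiff_snd.snd (E := ℝ × ℝ × ℝ)).contDiffAt
  exact (hf.ptm p hp).add (h2.mul (hf.px p hp))


lemma fderiv2_swap (hf : Sm f) (ht : 0 < t) (v w : ℝ × ℝ × ℝ) :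
    fderiv ℝ (fun q => fderiv ℝ (F3 f) q v) (t, x, y) w
      = fderiv ℝ (fun q => fderiv ℝ (F3 f) q w) (t, x, y) v := by
  have hd : DifferentiableAt ℝ (fderiv ℝ (F3 f)) (t, x, y) :=
    ((hf (t, x, y) ht).fderiv_right (m := ∞) (by simp)).differentiableAt
      (by simp)
  rw [fderiv_clm_apply hd (differentiableAt_const v),
      fderiv_clm_apply hd (differentiableAt_const w)]
  have hsymm := ((hf (t, x, y) ht).isSymmSndFDerivAt
    (by rw [minSmoothness_of_isRCLikeNormedField]; exact WithTop.coe_le_coe.2 le_top)) w v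
  simp [hsymm]

/-- generic: the `t`-partial of a function eventually equal to `G`. -/
lemma pt_congr {u : ℝ → ℝ → ℝ → ℝ} (h : F3 u =ᶠ[𝓝 (t, x, y)] G)
    (hG : DifferentiableAt ℝ G (t, x, y)) :
    _root_.pt u t x y = fderiv ℝ G (t, x, y) (1, 0, 0) := by
  have hcurve : Tendsto (fun s : ℝ => ((s, x, y) : ℝ × ℝ × ℝ)) (𝓝 t) (𝓝 (t, x, y)) :=
    (Continuous.tendsto (by continuity) t)
  have : (fun s => F3 u (s, x, y)) =ᶠ[𝓝 t] fun s => G (s, x, y) := h.comp_tendsto hcurve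
  exact (this.deriv_eq).trans (sect1 hG).deriv

lemma px_congr {u : ℝ → ℝ → ℝ → ℝ} (h : F3 u =ᶠ[𝓝 (t, x, y)] G)
    (hG : DifferentiableAt ℝ G (t, x, y)) :
    px3 u t x y = fderiv ℝ G (t, x, y) (0, 1, 0) := by
  have hcurve : Tendsto (fun s : ℝ => ((t, s, y) : ℝ × ℝ × ℝ)) (𝓝 x) (𝓝 (t, x, y)) :=
    (Continuous.tendsto (by continuity) x)
  have : (fun s => F3 u (t, s, y)) =ᶠ[𝓝 x] fun s => G (t, s, y) := h.comp_tendsto hcurve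
  exact (this.deriv_eq).trans (sect2 hG).deriv

lemma py_congr {u : ℝ → ℝ → ℝ → ℝ} (h : F3 u =ᶠ[𝓝 (t, x, y)] G)
    (hG : DifferentiableAt ℝ G (t, x, y)) :
    py3 u t x y = fderiv ℝ G (t, x, y) (0, 0, 1) := by
  have hcurve : Tendsto (fun s : ℝ => ((t, x, s) : ℝ × ℝ × ℝ)) (𝓝 y) (𝓝 (t, x, y)) :=
    (Continuous.tendsto (by continuity) y)
  have : (fun s => F3 u (t, x, s)) =ᶠ[𝓝 y] fun s => G (t, x, s) := h.comp_tendsto hcurve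
  exact (this.deriv_eq).trans (sect3 hG).deriv

lemma pt_px_comm (hf : Sm f) (ht : 0 < t) :
    _root_.pt (px3 f) t x y = px3 (_root_.pt f) t x y := by
  rw [pt_congr (ev_px hf ht) ((fd_smooth hf ht _).differentiableAt (by simp)),
      px_congr (ev_pt hf ht) ((fd_smooth hf ht _).differentiableAt (by simp))]
  exact fderiv2_swap hf ht _ _

lemma pt_py_comm (hf : Sm f) (ht : 0 < t) :
    _root_.pt (py3 f) t x y = py3 (_root_.pt f) t x y := by
  rw [pt_congr (ev_py hf ht) ((fd_smooth hf ht _).differentiableAt (by simp)),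
      py_congr (ev_pt hf ht) ((fd_smooth hf ht _).differentiableAt (by simp))]
  exact fderiv2_swap hf ht _ _

lemma px_py_comm (hf : Sm f) (ht : 0 < t) :
    px3 (py3 f) t x y = py3 (px3 f) t x y := by
  rw [px_congr (ev_py hf ht) ((fd_smooth hf ht _).differentiableAt (by simp)),
      py_congr (ev_px hf ht) ((fd_smooth hf ht _).differentiableAt (by simp))]
  exact fderiv2_swap hf ht _ _


lemma hasDerivAt_A (hη : 1 < η) (ht : 0 < t) :
    HasDerivAt (fun s : ℝ => s ^ (η + 1) / (η + 1)) (t ^ η) t := by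
  have h := (Real.hasDerivAt_rpow_const (x := t) (p := η + 1)
    (Or.inl (ne_of_gt ht))).div_const (η + 1)
  have hne : η + 1 ≠ 0 := by nlinarith
  have : (η + 1) * t ^ (η + 1 - 1) / (η + 1) = t ^ η := by
    rw [mul_div_assoc, mul_comm]
    field_simp
    rw [add_sub_cancel_right]
  rwa [this] at h

lemma hasDerivAt_B (ht : 0 < t) :
    HasDerivAt (fun s : ℝ => s ^ η) (η * t ^ (η - 1)) t :=
  Real.hasDerivAt_rpow_const (Or.inl (ne_of_gt ht))

lemma pt_hop (hη : 1 < η) (hf : Sm f) (ht : 0 < t) :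
    _root_.pt (Hop η f) t x y
      = (t ^ η * px3 f t x y + t ^ (η + 1) / (η + 1) * _root_.pt (px3 f) t x y)
        + (η * t ^ (η - 1) * py3 f t x y + t ^ η * _root_.pt (py3 f) t x y) :=
  (((hasDerivAt_A hη ht).mul (hf.px.hasDerivAt_pt ht)).add
    ((hasDerivAt_B ht).mul (hf.py.hasDerivAt_pt ht))).deriv

lemma px_hop (hf : Sm f) (ht : 0 < t) :
    px3 (Hop η f) t x y
      = t ^ (η + 1) / (η + 1) * px3 (px3 f) t x y + t ^ η * px3 (py3 f) t x y :=
  (((hf.px.hasDerivAt_px ht).const_mul (t ^ (η + 1) / (η + 1))).add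
    ((hf.py.hasDerivAt_px ht).const_mul (t ^ η))).deriv

lemma py_hop (hf : Sm f) (ht : 0 < t) :
    py3 (Hop η f) t x y
      = t ^ (η + 1) / (η + 1) * py3 (px3 f) t x y + t ^ η * py3 (py3 f) t x y :=
  (((hf.px.hasDerivAt_py ht).const_mul (t ^ (η + 1) / (η + 1))).add
    ((hf.py.hasDerivAt_py ht).const_mul (t ^ η))).deriv

lemma px_transp (hf : Sm f) (ht : 0 < t) :
    px3 (Transp f) t x y = px3 (_root_.pt f) t x y + y * px3 (px3 f) t x y :=
  ((hf.ptm.hasDerivAt_px ht).add ((hf.px.hasDerivAt_px ht).const_mul y)).deriv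

lemma py_transp (hf : Sm f) (ht : 0 < t) :
    py3 (Transp f) t x y
      = py3 (_root_.pt f) t x y + (1 * px3 f t x y + y * py3 (px3 f) t x y) :=
  ((hf.ptm.hasDerivAt_py ht).add ((hasDerivAt_id y).mul (hf.px.hasDerivAt_py ht))).deriv

lemma comm_base (hη : 1 < η) (hf : Sm f) (ht : 0 < t) :
    Transp (Hop η f) t x y - Hop η (Transp f) t x y = η * t ^ (η - 1) * py3 f t x y := by
  have e1 : Transp (Hop η f) t x y
      = _root_.pt (Hop η f) t x y + y * px3 (Hop η f) t x y := rfl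
  have e2 : Hop η (Transp f) t x y
      = t ^ (η + 1) / (η + 1) * px3 (Transp f) t x y
        + t ^ η * py3 (Transp f) t x y := rfl
  rw [e1, e2, pt_hop hη hf ht, px_hop hf ht, px_transp hf ht, py_transp hf ht,
    pt_px_comm hf ht, pt_py_comm hf ht, px_py_comm hf ht]
  ring

lemma py_hop_comm (hf : Sm f) (ht : 0 < t) :
    py3 (Hop η f) t x y = Hop η (py3 f) t x y := by
  rw [py_hop hf ht, ← px_py_comm hf ht]
  rfl

lemma px_congrU {u v : ℝ → ℝ → ℝ → ℝ} (h : ∀ a > (0:ℝ), ∀ b c, u a b c = v a b c)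
    (ht : 0 < t) : px3 u t x y = px3 v t x y := by
  unfold px3
  congr 1
  funext s
  exact h t ht s y

lemma py_congrU {u v : ℝ → ℝ → ℝ → ℝ} (h : ∀ a > (0:ℝ), ∀ b c, u a b c = v a b c)
    (ht : 0 < t) : py3 u t x y = py3 v t x y := by
  unfold py3
  congr 1
  funext s
  exact h t ht x s

lemma hop_congrU {u v : ℝ → ℝ → ℝ → ℝ} (h : ∀ a > (0:ℝ), ∀ b c, u a b c = v a b c)
    (ht : 0 < t) : Hop η u t x y = Hop η v t x y := by
  show t ^ (η + 1) / (η + 1) * px3 u t x y + t ^ η * py3 u t x y = _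
  rw [px_congrU h ht, py_congrU h ht]
  rfl

lemma hop_sub {u v : ℝ → ℝ → ℝ → ℝ} (hu : Sm u) (hv : Sm v) (ht : 0 < t) :
    Hop η (fun a b c => u a b c - v a b c) t x y = Hop η u t x y - Hop η v t x y := by
  have hx : px3 (fun a b c => u a b c - v a b c) t x y = px3 u t x y - px3 v t x y :=
    ((hu.hasDerivAt_px ht).sub (hv.hasDerivAt_px ht)).deriv
  have hy : py3 (fun a b c => u a b c - v a b c) t x y = py3 u t x y - py3 v t x y :=
    ((hu.hasDerivAt_py ht).sub (hv.hasDerivAt_py ht)).deriv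
  show t ^ (η + 1) / (η + 1) * px3 _ t x y + t ^ η * py3 _ t x y = _
  rw [hx, hy]
  show _ = t ^ (η + 1) / (η + 1) * px3 u t x y + t ^ η * py3 u t x y
    - (t ^ (η + 1) / (η + 1) * px3 v t x y + t ^ η * py3 v t x y)
  ring

lemma Sm.iter (hf : Sm f) (k : ℕ) : Sm ((Hop η)^[k] f) := by
  induction k with
  | zero => simpa using hf
  | succ n ih =>
    rw [Function.iterate_succ_apply']
    exact ih.hop

lemma Sm.cfun (hg : Sm f) (K : ℝ) : Sm (fun a b c => K * a ^ (η - 1) * py3 f a b c) := by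
  intro p hp
  exact ((contDiffAt_const.mul (contDiffAt_rpow (η - 1) hp)).mul (hg.py p hp))

lemma hop_cfun (hg : Sm f) (ht : 0 < t) (K : ℝ) :
    Hop η (fun a b c => K * a ^ (η - 1) * py3 f a b c) t x y
      = K * t ^ (η - 1) * py3 (Hop η f) t x y := by
  have hx : px3 (fun a b c => K * a ^ (η - 1) * py3 f a b c) t x y
      = K * t ^ (η - 1) * px3 (py3 f) t x y :=
    ((hg.py.hasDerivAt_px ht).const_mul (K * t ^ (η - 1))).deriv
  have hy : py3 (fun a b c => K * a ^ (η - 1) * py3 f a b c) t x y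
      = K * t ^ (η - 1) * py3 (py3 f) t x y :=
    ((hg.py.hasDerivAt_py ht).const_mul (K * t ^ (η - 1))).deriv
  show t ^ (η + 1) / (η + 1) * px3 _ t x y + t ^ η * py3 _ t x y = _
  rw [hx, hy, py_hop_comm hg ht]
  show _ = K * t ^ (η - 1) *
    (t ^ (η + 1) / (η + 1) * px3 (py3 f) t x y + t ^ η * py3 (py3 f) t x y)
  ring


end CommAux

open CommAux in
/-- For every positive integer `k`,
`[∂_t + y ∂_x, H^k] = k η t^(η-1) ∂_y H^(k-1)`. -/
theorem commutator_transport_Hpow (η : ℝ) (hη : 1 < η) (k : ℕ) (hk : 1 ≤ k)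
    (f : ℝ → ℝ → ℝ → ℝ)
    (hf : ContDiff ℝ (⊤ : ℕ∞) (fun p : ℝ × ℝ × ℝ => f p.1 p.2.1 p.2.2)) :
    ∀ t > (0 : ℝ), ∀ x y : ℝ,
      Transp ((Hop η)^[k] f) t x y - (Hop η)^[k] (Transp f) t x y
        = (k : ℝ) * η * t ^ (η - 1) * py3 ((Hop η)^[k - 1] f) t x y := by
  have hSm : Sm f := fun p hp => (hf.of_le (by simp)).contDiffAt
  induction k, hk using Nat.le_induction with
  | base =>
    intro t ht x y
    simp only [Function.iterate_one, Nat.cast_one, Nat.sub_self,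
      Function.iterate_zero, id_eq, one_mul]
    exact comm_base hη hSm ht
  | succ k hk1 IH =>
    intro t ht x y
    have hg : Sm ((Hop η)^[k] f) := hSm.iter k
    have hTg : Sm (Transp ((Hop η)^[k] f)) := hg.transp
    have hgm : Sm ((Hop η)^[k - 1] f) := hSm.iter (k - 1)
    have hcS : Sm (fun a b c => (k : ℝ) * η * a ^ (η - 1) * py3 ((Hop η)^[k - 1] f) a b c) := by
      have := hgm.cfun (η := η) ((k : ℝ) * η)
      convert this using 4 <;> ring
    have e1 : (Hop η)^[k + 1] f = Hop η ((Hop η)^[k] f) :=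
      Function.iterate_succ_apply' (Hop η) k f
    have e2 : (Hop η)^[k + 1] (Transp f) = Hop η ((Hop η)^[k] (Transp f)) :=
      Function.iterate_succ_apply' (Hop η) k (Transp f)
    have hUeq : ∀ a > (0:ℝ), ∀ b c, (Hop η)^[k] (Transp f) a b c
        = Transp ((Hop η)^[k] f) a b c
          - (k : ℝ) * η * a ^ (η - 1) * py3 ((Hop η)^[k - 1] f) a b c := by
      intro a ha b c
      have := IH a ha b c
      linarith
    have hsplit : Hop η ((Hop η)^[k] (Transp f)) t x y
        = Hop η (Transp ((Hop η)^[k] f)) t x y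
          - Hop η (fun a b c => (k : ℝ) * η * a ^ (η - 1)
              * py3 ((Hop η)^[k - 1] f) a b c) t x y := by
      rw [hop_congrU hUeq ht]
      exact hop_sub hTg hcS ht
    have hHc : Hop η (fun a b c => (k : ℝ) * η * a ^ (η - 1)
          * py3 ((Hop η)^[k - 1] f) a b c) t x y
        = (k : ℝ) * η * t ^ (η - 1) * py3 ((Hop η)^[k] f) t x y := by
      have h1 : Hop η (fun a b c => ((k : ℝ) * η) * a ^ (η - 1)
            * py3 ((Hop η)^[k - 1] f) a b c) t x y
          = ((k : ℝ) * η) * t ^ (η - 1) * py3 (Hop η ((Hop η)^[k - 1] f)) t x y :=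
        hop_cfun hgm ht ((k : ℝ) * η)
      have h2 : Hop η ((Hop η)^[k - 1] f) = (Hop η)^[k] f := by
        calc Hop η ((Hop η)^[k - 1] f) = (Hop η)^[k - 1 + 1] f :=
              (Function.iterate_succ_apply' (Hop η) (k - 1) f).symm
          _ = (Hop η)^[k] f := by congr 1; omega
      rw [h2] at h1
      exact h1
    have hbase : Transp (Hop η ((Hop η)^[k] f)) t x y
        - Hop η (Transp ((Hop η)^[k] f)) t x y
        = η * t ^ (η - 1) * py3 ((Hop η)^[k] f) t x y := comm_base hη hg ht
    have hred : k + 1 - 1 = k := by omega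
    rw [e1, e2, hred, hsplit, hHc]
    push_cast
    linarith
end

section
/- For every natural number k ≥ 1 and every real A ≥ 25, one has ∑_{j=1}^{k-1} A^{k-3} j!(k−j)! / ((j+1)²(k−j+1)²) ≤ 24 · A^{k-3} k!/(k+1)². -/
open Finset

private lemma sum_inv_sq_le (n : ℕ) :
    ∑ j ∈ Finset.Icc 1 n, (1 : ℝ) / ((j : ℝ) + 1) ^ 2 ≤ 1 - 1 / ((n : ℝ) + 1) := by
  induction n with
  | zero => simp
  | succ n ih =>
    rw [Finset.sum_Icc_succ_top (by omega)]
    have h1 : (0:ℝ) < (n:ℝ) + 1 := by positivity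
    have h2 : (0:ℝ) < (n:ℝ) + 2 := by positivity
    have key : (1:ℝ) / ((n:ℝ) + 2) ^ 2 ≤ 1 / ((n:ℝ)+1) - 1/((n:ℝ)+2) := by
      rw [div_sub_div _ _ (ne_of_gt h1) (ne_of_gt h2)]
      have hnum : (1:ℝ)*((n:ℝ)+2) - ((n:ℝ)+1)*1 = 1 := by ring
      rw [hnum]
      apply one_div_le_one_div_of_le (by positivity)
      nlinarith
    push_cast
    have : ((n:ℝ) + 1 + 1) = (n:ℝ) + 2 := by ring
    rw [this] at *
    linarith

private lemma sum_reflect_eq (k : ℕ) (hk : 1 ≤ k) :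
    ∑ j ∈ Finset.Icc 1 (k-1), (1 : ℝ) / (((k - j : ℕ) : ℝ) + 1) ^ 2
      = ∑ j ∈ Finset.Icc 1 (k-1), (1 : ℝ) / ((j : ℝ) + 1) ^ 2 := by
  apply Finset.sum_nbij' (fun j => k - j) (fun j => k - j)
  · intro a ha; simp only [Finset.mem_Icc] at *; omega
  · intro a ha; simp only [Finset.mem_Icc] at *; omega
  · intro a ha; simp only [Finset.mem_Icc] at *; omega
  · intro a ha; simp only [Finset.mem_Icc] at *; omega
  · intro a ha
    simp only [Finset.mem_Icc] at ha
    rfl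

/-- For `k ≥ 1` and real `A ≥ 25`,
`∑_{j=1}^{k-1} A^{k-3} j!(k-j)! / ((j+1)²(k-j+1)²) ≤ 24 A^{k-3} k!/(k+1)²`. -/
theorem weighted_factorial_sum_le (k : ℕ) (hk : 1 ≤ k) (A : ℝ) (hA : 25 ≤ A) :
    ∑ j ∈ Finset.Icc 1 (k - 1),
        A ^ ((k : ℤ) - 3) * (Nat.factorial j : ℝ) * (Nat.factorial (k - j) : ℝ) /
          (((j : ℝ) + 1) ^ 2 * ((k : ℝ) - (j : ℝ) + 1) ^ 2)
      ≤ 24 * A ^ ((k : ℤ) - 3) * (Nat.factorial k : ℝ) / ((k : ℝ) + 1) ^ 2 := by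
  have hA0 : (0:ℝ) < A := by linarith
  have hAc : (0:ℝ) < A ^ ((k : ℤ) - 3) := zpow_pos hA0 _
  set C : ℝ := A ^ ((k : ℤ) - 3) * (Nat.factorial k : ℝ) / ((k : ℝ) + 1) ^ 2 with hC
  have hC0 : 0 ≤ C := by positivity
  have key : ∀ j ∈ Finset.Icc 1 (k-1),
      A ^ ((k : ℤ) - 3) * (Nat.factorial j : ℝ) * (Nat.factorial (k - j) : ℝ) /
          (((j : ℝ) + 1) ^ 2 * ((k : ℝ) - (j : ℝ) + 1) ^ 2)
        ≤ C * (2 / ((j : ℝ) + 1) ^ 2 + 2 / ((k : ℝ) - (j : ℝ) + 1) ^ 2) := by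
    intro j hj
    simp only [Finset.mem_Icc] at hj
    have hjk : j ≤ k := by omega
    have hjr : (0:ℝ) ≤ (j:ℝ) := Nat.cast_nonneg j
    have hvk : (1:ℝ) ≤ (k:ℝ) - (j:ℝ) := by
      have : (j:ℝ) + 1 ≤ (k:ℝ) := by exact_mod_cast Nat.add_le_of_le_sub hk (by omega)
      linarith
    have ha : (0:ℝ) < ((j:ℝ) + 1) ^ 2 := by positivity
    have hb : (0:ℝ) < ((k:ℝ) - (j:ℝ) + 1) ^ 2 := by positivity
    have hK : (0:ℝ) < ((k:ℝ) + 1) ^ 2 := by positivity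
    have hf : (Nat.factorial j : ℝ) * (Nat.factorial (k - j) : ℝ) ≤ (Nat.factorial k : ℝ) := by
      exact_mod_cast Nat.le_of_dvd (Nat.factorial_pos k)
        (Nat.factorial_mul_factorial_dvd_factorial hjk)
    have hsq : ((k:ℝ) + 1) ^ 2 ≤ 2 * ((j:ℝ) + 1) ^ 2 + 2 * ((k:ℝ) - (j:ℝ) + 1) ^ 2 := by
      nlinarith [sq_nonneg ((j:ℝ) - ((k:ℝ) - (j:ℝ)))]
    have hkey : 1 / (((j:ℝ)+1)^2 * ((k:ℝ)-(j:ℝ)+1)^2)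
        ≤ (2 / ((j:ℝ)+1)^2 + 2 / ((k:ℝ)-(j:ℝ)+1)^2) / ((k:ℝ)+1)^2 := by
      rw [div_le_div_iff₀ (by positivity) hK]
      have hexp : (2 / ((j:ℝ)+1)^2 + 2 / ((k:ℝ)-(j:ℝ)+1)^2) * (((j:ℝ)+1)^2 * ((k:ℝ)-(j:ℝ)+1)^2)
          = 2 * ((k:ℝ)-(j:ℝ)+1)^2 + 2 * ((j:ℝ)+1)^2 := by
        field_simp
      rw [hexp]
      linarith
    calc A ^ ((k : ℤ) - 3) * (Nat.factorial j : ℝ) * (Nat.factorial (k - j) : ℝ) /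
          (((j : ℝ) + 1) ^ 2 * ((k : ℝ) - (j : ℝ) + 1) ^ 2)
        = (A ^ ((k : ℤ) - 3) * ((Nat.factorial j : ℝ) * (Nat.factorial (k - j) : ℝ)))
            * (1 / (((j:ℝ)+1)^2 * ((k:ℝ)-(j:ℝ)+1)^2)) := by ring
      _ ≤ (A ^ ((k : ℤ) - 3) * (Nat.factorial k : ℝ))
            * ((2 / ((j:ℝ)+1)^2 + 2 / ((k:ℝ)-(j:ℝ)+1)^2) / ((k:ℝ)+1)^2) := by
          apply mul_le_mul
          · exact mul_le_mul_of_nonneg_left hf (le_of_lt hAc)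
          · exact hkey
          · positivity
          · positivity
      _ = C * (2 / ((j : ℝ) + 1) ^ 2 + 2 / ((k : ℝ) - (j : ℝ) + 1) ^ 2) := by
          rw [hC]; ring
  refine le_trans (Finset.sum_le_sum key) ?_
  rw [← Finset.mul_sum]
  have hsum : ∑ j ∈ Finset.Icc 1 (k-1),
      (2 / ((j : ℝ) + 1) ^ 2 + 2 / ((k : ℝ) - (j : ℝ) + 1) ^ 2) ≤ 4 := by
    have hcongr : ∀ j ∈ Finset.Icc 1 (k-1),
        (2 / ((j : ℝ) + 1) ^ 2 + 2 / ((k : ℝ) - (j : ℝ) + 1) ^ 2)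
          = 2 * (1 / ((j : ℝ) + 1) ^ 2) + 2 * (1 / (((k - j : ℕ) : ℝ) + 1) ^ 2) := by
      intro j hj
      simp only [Finset.mem_Icc] at hj
      have hjk : j ≤ k := by omega
      rw [Nat.cast_sub hjk]
      ring
    rw [Finset.sum_congr rfl hcongr, Finset.sum_add_distrib, ← Finset.mul_sum, ← Finset.mul_sum,
      sum_reflect_eq k hk]
    have h1 := sum_inv_sq_le (k-1)
    have h2 : (0:ℝ) < ((k-1:ℕ):ℝ) + 1 := by positivity
    have h3 : (0:ℝ) ≤ 1 / (((k-1:ℕ):ℝ) + 1) := by positivity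
    linarith
  calc C * ∑ j ∈ Finset.Icc 1 (k-1),
        (2 / ((j : ℝ) + 1) ^ 2 + 2 / ((k : ℝ) - (j : ℝ) + 1) ^ 2)
      ≤ C * 24 := by
        apply mul_le_mul_of_nonneg_left _ hC0
        refine le_trans hsum (by norm_num)
    _ = 24 * A ^ ((k : ℤ) - 3) * (Nat.factorial k : ℝ) / ((k : ℝ) + 1) ^ 2 := by
        rw [hC]; ring
end
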